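/- Let r₀ : ℝ → ℝ be C¹, bounded, with bounded derivative, such that r₀(+∞) := lim_{x→+∞} r₀(x) exists and is finite, and let α ∈ ℝ and ε > 0 satisfy: r₀'(α)·( r₀(α) + r₀(+∞) ) < 0, r₀'(α)·r₀(α) < 0, and |r₀(α) + r₀(x)| > ε for every x ≥ α. Set γ₂⁺(α) := min{ |f(η)| : η ∈ [ε, sup_{x ≥ α} |r₀(α) + r₀(x)|] } and t_c := 1 / ( √(k(2r₀(α)))·|r₀'(α)|·γ₂⁺(α) ). Then any C¹ solution of the diagonal system ∂ₜr + k(r−ℓ)·∂ₓr = 0, ∂ₜℓ − k(r−ℓ)·∂ₓℓ = 0 with data r(0,·) = r₀, ℓ(0,·) = −r₀ on a strip [0,T)×ℝ, admitting C¹ forward and backward characteristic families (with continuous mixed second partials) and a C¹ intersection function β with x₁(t,α') = x₂(t, β(t,α')), must have T ≤ t_c; that is, the critical breakdown time t*(α) satisfies t*(α) ≤ 1/( √(k(2r₀(α)))·|r₀'(α)|·γ₂⁺(α) ). -/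

import Mathlib

/-!
Along the forward characteristic `x₁(·, α)` the invariant `r` keeps the value `r₀(α)`, while `l`
equals `-r₀(b)`, where `x₂(·, b)` is the backward characteristic through the same point; forward
characteristics move right and backward ones left, so `b ≥ α`. Hence `η = r - l = r₀(α) + r₀(b)`
never vanishes, so it keeps the sign of `η(0) = 2r₀(α)`, and `|f(η)| ≥ γ₂⁺(α)`.
The Jacobian `J = ∂ₐx₁(·, α)` solves `J' = k'(η)(r₀'(α) - J ∂ₓl)`, and `η' = -2k(η) ∂ₓl`, so
`v = J / √k(η)` satisfies `v' = r₀'(α) f(η) ≤ -|r₀'(α)| γ₂⁺(α)`. As `∂ₓr · J = r₀'(α) ≠ 0`,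
`J` and hence `v` stay positive, and `v(0) = 1 / √k(2r₀(α))` bounds the lifespan by `t_c`.
-/

open Filter

/-- The primitive `L` of the wave velocity `Q(ξ) = √(1+ξ²)` with `L 0 = 0`. -/
noncomputable def L (u : ℝ) : ℝ := (u * Real.sqrt (1 + u ^ 2) + Real.arsinh u) / 2

/-- The function `f(η) := k'(η)/√(k(η))`. -/
noncomputable def fk (k : ℝ → ℝ) (η : ℝ) : ℝ := deriv k η / Real.sqrt (k η)

open Set Topology Function

lemma sub_le_mul_sub_of_hasDerivAt_le {f f' : ℝ → ℝ} {a b C : ℝ} (hab : a ≤ b)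
    (hf : ContinuousOn f (Icc a b)) (hf' : ∀ x ∈ Ioo a b, HasDerivAt f (f' x) x)
    (hC : ∀ x ∈ Ioo a b, f' x ≤ C) : f b - f a ≤ C * (b - a) := by
  refine (convex_Icc a b).image_sub_le_mul_sub_of_deriv_le hf ?_ ?_ a (left_mem_Icc.2 hab) b
    (right_mem_Icc.2 hab) hab <;> rw [interior_Icc]
  · exact fun x hx => (hf' x hx).differentiableAt.differentiableWithinAt
  · exact fun x hx => (hf' x hx).deriv ▸ hC x hx

lemma eq_of_hasDerivAt_zero {f : ℝ → ℝ} {a b : ℝ} (hab : a ≤ b) (hf : ContinuousOn f (Icc a b))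
    (hf' : ∀ x ∈ Ioo a b, HasDerivAt f 0 x) : f b = f a := by
  have h₁ := sub_le_mul_sub_of_hasDerivAt_le hab hf hf' fun _ _ => le_rfl
  have h₂ := sub_le_mul_sub_of_hasDerivAt_le hab hf.neg (fun x hx => (hf' x hx).neg)
    fun _ _ => neg_zero.le
  simp only [Pi.neg_apply, zero_mul] at h₁ h₂
  linarith

lemma mul_pos_of_continuousOn_of_ne_zero {f : ℝ → ℝ} {a b : ℝ} (hf : ContinuousOn f (Icc a b))
    (hf₀ : ∀ x ∈ Icc a b, f x ≠ 0) : ∀ x ∈ Icc a b, 0 < f a * f x := by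
  intro x hx
  by_contra! hle
  have hsub : uIcc a x ⊆ Icc a b := by rw [uIcc_of_le hx.1]; exact Icc_subset_Icc_right hx.2
  have h0 : (0 : ℝ) ∈ uIcc (f a) (f x) := by
    rcases (hf₀ a (left_mem_Icc.2 (hx.1.trans hx.2))).lt_or_gt with h | h
    · refine mem_uIcc.2 (Or.inl ⟨h.le, le_of_not_gt fun h' => ?_⟩)
      exact hle.not_gt (mul_pos_of_neg_of_neg h h')
    · refine mem_uIcc.2 (Or.inr ⟨le_of_not_gt fun h' => ?_, h.le⟩)
      exact hle.not_gt (mul_pos h h')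
  obtain ⟨y, hy, hy0⟩ := intermediate_value_uIcc (hf.mono hsub) h0
  exact hf₀ y (hsub hy) hy0

lemma le_biSup_of_abs_le {f : ℝ → ℝ} {s : Set ℝ} {C : ℝ} (hf : ∀ x, |f x| ≤ C) {x : ℝ}
    (hx : x ∈ s) : f x ≤ ⨆ y ∈ s, f y := by
  have hbdd : BddAbove (range fun y => ⨆ _ : y ∈ s, f y) :=
    ⟨C, forall_mem_range.2 fun y =>
      Real.iSup_le (fun _ => (le_abs_self _).trans (hf y)) ((abs_nonneg _).trans (hf y))⟩
  simpa only [ciSup_pos hx] using le_ciSup hbdd x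

lemma abs_add_le_biSup {f : ℝ → ℝ} {C : ℝ} (hf : ∀ x, |f x| ≤ C) {a x : ℝ} (hx : a ≤ x) :
    |f a + f x| ≤ ⨆ y ∈ Ici a, |f a + f y| :=
  le_biSup_of_abs_le (C := |f a| + C)
    (fun y => (abs_abs _).trans_le ((abs_add_le _ _).trans (add_le_add le_rfl (hf y)))) hx

lemma sInf_image_Icc_pos {g : ℝ → ℝ} {a b : ℝ} (hab : a ≤ b) (hg : ContinuousOn g (Icc a b))
    (hpos : ∀ x ∈ Icc a b, 0 < g x) : 0 < sInf (g '' Icc a b) := by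
  obtain ⟨x, hx, hgx⟩ := (isCompact_Icc.image_of_continuousOn hg).sInf_mem
    ((nonempty_Icc.2 hab).image g)
  exact hgx ▸ hpos x hx

lemma mul_le_neg_abs_mul {a b c e γ : ℝ} (hac : a * c < 0) (hce : 0 < c * e) (heb : 0 < e * b)
    (hγ : γ ≤ |b|) : a * b ≤ -(|a| * γ) := by
  have hab : a * b < 0 := by nlinarith
  rw [← neg_neg (a * b), ← abs_of_neg hab, abs_mul]
  exact neg_le_neg (mul_le_mul_of_nonneg_left hγ (abs_nonneg a))

lemma hasDerivAt_comp_curve {u : ℝ → ℝ → ℝ} {X : ℝ → ℝ} {t v : ℝ}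
    (hu : DifferentiableAt ℝ (uncurry u) (t, X t)) (hX : HasDerivAt X v t) :
    HasDerivAt (fun s => u s (X s)) (deriv (fun s => u s (X t)) t + v * deriv (u t) (X t)) t := by
  have hD := hu.hasFDerivAt
  set D := fderiv ℝ (uncurry u) (t, X t)
  have h₁ : HasDerivAt (fun s => u s (X t)) (D (1, 0)) t :=
    hD.comp_hasDerivAt (f := fun s => (s, X t)) t
      ((hasDerivAt_id t).prodMk (hasDerivAt_const t (X t)))
  have h₂ : HasDerivAt (u t) (D (0, 1)) (X t) :=
    hD.comp_hasDerivAt (f := fun y => (t, y)) (X t)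
      ((hasDerivAt_const (X t) t).prodMk (hasDerivAt_id (X t)))
  rw [h₁.deriv, h₂.deriv, show D (1, 0) + v * D (0, 1) = D (1, v) by
    rw [← smul_eq_mul, ← map_smul, ← map_add]; simp]
  exact hD.comp_hasDerivAt t ((hasDerivAt_id t).prodMk hX)

lemma hasDerivAt_fderivWithin_snd {u : ℝ → ℝ → ℝ} {s : Set ℝ} {t : ℝ}
    (hu : DifferentiableOn ℝ (uncurry u) (s ×ˢ univ)) (ht : t ∈ s) (x : ℝ) :
    HasDerivAt (u t) (fderivWithin ℝ (uncurry u) (s ×ˢ univ) (t, x) (0, 1)) x := by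
  have h := (hu (t, x) ⟨ht, trivial⟩).hasFDerivWithinAt.comp_hasDerivWithinAt x
    ((hasDerivAt_const x t).prodMk (hasDerivAt_id x)).hasDerivWithinAt
    (fun _ _ => ⟨ht, trivial⟩ : MapsTo (fun y => (t, y)) univ (s ×ˢ univ))
  exact hasDerivWithinAt_univ.1 h

lemma continuousOn_deriv_snd {u : ℝ → ℝ → ℝ} {s : Set ℝ}
    (hu : ContDiffOn ℝ 1 (uncurry u) (s ×ˢ univ)) (hs : UniqueDiffOn ℝ s) :
    ContinuousOn (fun p : ℝ × ℝ => deriv (u p.1) p.2) (s ×ˢ univ) :=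
  ((hu.continuousOn_fderivWithin (hs.prod uniqueDiffOn_univ) le_rfl).clm_apply
    continuousOn_const).congr fun p hp =>
      (hasDerivAt_fderivWithin_snd (hu.differentiableOn one_ne_zero) hp.1 p.2).deriv

lemma eq_apply_zero_of_transport {u c : ℝ → ℝ → ℝ} {X : ℝ → ℝ} {τ : ℝ}
    (hu : ContDiffOn ℝ 1 (uncurry u) (Icc 0 τ ×ˢ univ))
    (hpde : ∀ t ∈ Ioo 0 τ, ∀ x, deriv (fun s => u s x) t + c t x * deriv (u t) x = 0)
    (hX : ∀ t ∈ Icc 0 τ, HasDerivAt X (c t (X t)) t) {t : ℝ} (ht : t ∈ Icc 0 τ) :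
    u t (X t) = u 0 (X 0) := by
  have hsub : Icc 0 t ⊆ Icc 0 τ := Icc_subset_Icc_right ht.2
  refine eq_of_hasDerivAt_zero (f := fun s => u s (X s)) ht.1 ?_ fun s hs => ?_
  · exact hu.continuousOn.comp (continuousOn_id.prodMk
      (HasDerivAt.continuousOn fun s hs => hX s (hsub hs))) fun s hs => ⟨hsub hs, trivial⟩
  · have hs' : s ∈ Ioo 0 τ := ⟨hs.1, hs.2.trans_le ht.2⟩
    have hdiff : DifferentiableAt ℝ (uncurry u) (s, X s) :=
      (hu.contDiffAt (prod_mem_nhds (Icc_mem_nhds hs'.1 hs'.2) univ_mem)).differentiableAt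
        one_ne_zero
    have h := hasDerivAt_comp_curve hdiff (hX s (Ioo_subset_Icc_self hs'))
    rwa [hpde s hs'] at h

section Variational

variable {X G q : ℝ → ℝ → ℝ} {τ : ℝ}
  (hX : ∀ a, ∀ t ∈ Icc 0 τ, HasDerivAt (fun s => X s a) (G t a) t) (hX₀ : ∀ a, X 0 a = a)
  (hG : ContinuousOn (uncurry G) (Icc 0 τ ×ˢ univ))
  (hGq : ∀ t ∈ Icc 0 τ, ∀ a, HasDerivAt (G t) (q t a) a)
  (hq : ContinuousOn (uncurry q) (Icc 0 τ ×ˢ univ))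
include hX hX₀ hG hGq hq

lemma hasDerivAt_param_one_add_integral {t : ℝ} (ht : t ∈ Icc 0 τ) (α : ℝ) :
    HasDerivAt (X t) (1 + ∫ s in 0..t, q s α) α := by
  have hsub : Icc 0 t ⊆ Icc 0 τ := Icc_subset_Icc_right ht.2
  have hIoc : uIoc 0 t ⊆ Icc 0 t := by rw [uIoc_of_le ht.1]; exact Ioc_subset_Icc_self
  have hslice : ∀ {F : ℝ → ℝ → ℝ}, ContinuousOn (uncurry F) (Icc 0 τ ×ˢ univ) →
      ∀ a, ContinuousOn (fun s => F s a) (Icc 0 t) := fun hF a =>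
    hF.comp (continuousOn_id.prodMk continuousOn_const) fun s hs => ⟨hsub hs, trivial⟩
  have hrepr : X t = fun a => a + ∫ s in 0..t, G s a := by
    funext a
    rw [intervalIntegral.integral_eq_sub_of_hasDerivAt (f := fun s => X s a)
      (fun s hs => hX a s (hsub (uIcc_of_le ht.1 ▸ hs)))
      ((hslice hG a).intervalIntegrable_of_Icc ht.1), hX₀]
    ring
  obtain ⟨C, hC⟩ : ∃ C, ∀ p ∈ Icc 0 t ×ˢ Metric.closedBall α 1, ‖uncurry q p‖ ≤ C :=
    (isCompact_Icc.prod (isCompact_closedBall α 1)).exists_bound_of_continuousOn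
      (hq.mono (prod_mono hsub (subset_univ _)))
  have hint := intervalIntegral.hasDerivAt_integral_of_dominated_loc_of_deriv_le
    (μ := MeasureTheory.volume) (F := fun a s => G s a) (F' := fun a s => q s a)
    (bound := fun _ => C) (Metric.ball_mem_nhds α one_pos)
    (Eventually.of_forall fun a =>
      ((hslice hG a).mono hIoc).aestronglyMeasurable measurableSet_uIoc)
    ((hslice hG α).intervalIntegrable_of_Icc ht.1)
    (((hslice hq α).mono hIoc).aestronglyMeasurable measurableSet_uIoc)
    (Eventually.of_forall fun s hs a ha => hC (s, a) ⟨hIoc hs, Metric.ball_subset_closedBall ha⟩)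
    intervalIntegrable_const
    (Eventually.of_forall fun s hs a _ => hGq s (hsub (hIoc hs)) a)
  rw [hrepr]
  exact (hasDerivAt_id α).add hint.2

lemma hasDerivAt_deriv_param {t : ℝ} (ht : t ∈ Ioo 0 τ) (α : ℝ) :
    HasDerivAt (fun s => deriv (X s) α) (q t α) t := by
  have hqα : ContinuousOn (fun s => q s α) (Icc 0 τ) :=
    hq.comp (continuousOn_id.prodMk continuousOn_const) fun s hs => ⟨hs, trivial⟩
  have hFTC : HasDerivAt (fun s => 1 + ∫ σ in 0..s, q σ α) (q t α) t :=
    (intervalIntegral.integral_hasDerivAt_right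
      ((hqα.mono (Icc_subset_Icc_right ht.2.le)).intervalIntegrable_of_Icc ht.1.le)
      ((hqα.mono Ioo_subset_Icc_self).stronglyMeasurableAtFilter isOpen_Ioo t ht)
      (hqα.continuousAt (Icc_mem_nhds ht.1 ht.2))).const_add 1
  refine hFTC.congr_of_eventuallyEq ?_
  filter_upwards [Icc_mem_nhds ht.1 ht.2] with s hs
  exact (hasDerivAt_param_one_add_integral hX hX₀ hG hGq hq hs α).deriv

end Variational

lemma continuous_fk {k : ℝ → ℝ} (hk₁ : ContDiff ℝ 1 k) (hkpos : ∀ η, 0 < k η) :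
    Continuous (fk k) :=
  (hk₁.continuous_deriv le_rfl).div (hk₁.continuous.sqrt) fun η => (Real.sqrt_pos.2 (hkpos η)).ne'

lemma abs_fk_abs {k : ℝ → ℝ} (hkeven : ∀ η, k (-η) = k η) (η : ℝ) : |fk k (|η|)| = |fk k η| := by
  have hodd : deriv k (-η) = -deriv k η := by
    have h := deriv_comp_neg (f := k) (x := η)
    rw [show (fun x => k (-x)) = k from funext hkeven] at h
    linarith
  rcases abs_choice η with h | h <;> rw [h]
  simp only [fk, hodd, hkeven, neg_div, abs_neg]

lemma mul_fk_pos {k : ℝ → ℝ} (hkpos : ∀ η, 0 < k η) (hksign : ∀ η, η ≠ 0 → 0 < η * deriv k η)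
    {η : ℝ} (hη : η ≠ 0) : 0 < η * fk k η := by
  rw [fk, ← mul_div_assoc]
  exact div_pos (hksign η hη) (Real.sqrt_pos.2 (hkpos η))

lemma hasDerivAt_div_sqrt_comp {k J η : ℝ → ℝ} {c P t : ℝ} (hk : DifferentiableAt ℝ k (η t))
    (hkpos : 0 < k (η t)) (hJ : HasDerivAt J (deriv k (η t) * (c - P * J t)) t)
    (hη : HasDerivAt η (-(2 * k (η t) * P)) t) :
    HasDerivAt (fun s => J s / √(k (η s))) (c * fk k (η t)) t := by
  have hw := (hk.hasDerivAt.comp t hη).sqrt hkpos.ne'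
  have hs : 0 < √(k (η t)) := Real.sqrt_pos.2 hkpos
  have hsq : √(k (η t)) ^ 2 = k (η t) := Real.sq_sqrt hkpos.le
  refine (hJ.div hw hs.ne').congr_deriv ?_
  simp only [fk, comp_apply]
  field_simp
  rw [hsq]
  ring

lemma hasDerivAt_sqrt_one_add_sq (u : ℝ) :
    HasDerivAt (fun v : ℝ => √(1 + v ^ 2)) (u / √(1 + u ^ 2)) u := by
  have h := ((hasDerivAt_pow 2 u).const_add 1).sqrt (by positivity)
  convert h using 1
  field_simp
  norm_num [mul_comm]

lemma hasDerivAt_L (u : ℝ) : HasDerivAt L √(1 + u ^ 2) u := by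
  have h : HasDerivAt L ((1 * √(1 + u ^ 2) + u * (u / √(1 + u ^ 2)) + (√(1 + u ^ 2))⁻¹) / 2) u :=
    (((hasDerivAt_id' u).mul (hasDerivAt_sqrt_one_add_sq u)).add
      (Real.hasDerivAt_arsinh u)).div_const 2
  convert h using 1
  have hs : 0 < √(1 + u ^ 2) := by positivity
  have hsq : √(1 + u ^ 2) ^ 2 = 1 + u ^ 2 := Real.sq_sqrt (by positivity)
  field_simp
  linear_combination hsq

lemma L_strictMono : StrictMono L :=
  strictMono_of_deriv_pos fun u => by rw [(hasDerivAt_L u).deriv]; positivity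

lemma L_neg (u : ℝ) : L (-u) = -L u := by
  simp only [L, Real.arsinh_neg, even_two, Even.neg_pow]
  ring

lemma L_mul_self_pos {u : ℝ} (hu : u ≠ 0) : 0 < L u * u := by
  have hL0 : L 0 = 0 := by simp [L]
  rcases hu.lt_or_gt with hu | hu
  · exact mul_pos_of_neg_of_neg (hL0 ▸ L_strictMono hu) hu
  · exact mul_pos (hL0 ▸ L_strictMono hu) hu

lemma tendsto_L_atTop : Tendsto L atTop atTop := by
  refine tendsto_atTop_mono' _ ?_ (tendsto_id.atTop_div_const (zero_lt_two' ℝ))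
  filter_upwards [eventually_ge_atTop 0] with u hu
  have h₁ : u ≤ u * √(1 + u ^ 2) :=
    le_mul_of_one_le_right hu (Real.one_le_sqrt.2 (by nlinarith))
  have h₂ : 0 ≤ Real.arsinh u := Real.arsinh_nonneg_iff.2 hu
  simp only [L, id]
  linarith

lemma L_surjective : Surjective L := by
  have hcont : Continuous L := continuous_iff_continuousAt.2 fun u => (hasDerivAt_L u).continuousAt
  refine hcont.surjective tendsto_L_atTop ?_
  have h := tendsto_neg_atTop_atBot.comp (tendsto_L_atTop.comp tendsto_neg_atBot_atTop)
  simpa [comp_def, L_neg] using h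

lemma exists_neg_two_mul_L_eq (η : ℝ) : ∃ u, -(2 * L u) = η := by
  obtain ⟨u, hu⟩ := L_surjective (-η / 2)
  exact ⟨u, by rw [hu]; ring⟩

section Speed

variable {k : ℝ → ℝ} (hk : ∀ u : ℝ, k (-(2 * L u)) = √(1 + u ^ 2))
include hk

lemma k_pos (η : ℝ) : 0 < k η := by
  obtain ⟨u, rfl⟩ := exists_neg_two_mul_L_eq η
  rw [hk]
  positivity

lemma k_neg (η : ℝ) : k (-η) = k η := by
  obtain ⟨u, rfl⟩ := exists_neg_two_mul_L_eq η
  rw [neg_neg, hk, ← neg_sq, ← hk (-u), L_neg, mul_neg, neg_neg]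

lemma deriv_k_neg_two_mul_L (hk₁ : Differentiable ℝ k) (u : ℝ) :
    deriv k (-(2 * L u)) = -u / (2 * (1 + u ^ 2)) := by
  have hcomp : HasDerivAt (fun v => k (-(2 * L v))) _ u :=
    (hk₁ _).hasDerivAt.comp u ((hasDerivAt_L u).const_mul 2).neg
  rw [show (fun v => k (-(2 * L v))) = fun v => √(1 + v ^ 2) from funext hk] at hcomp
  have h := (hasDerivAt_sqrt_one_add_sq u).unique hcomp
  have hs : 0 < √(1 + u ^ 2) := by positivity
  have hsq : √(1 + u ^ 2) ^ 2 = 1 + u ^ 2 := Real.sq_sqrt (by positivity)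
  rw [← hsq]
  field_simp at h ⊢
  linear_combination h

lemma mul_deriv_k_pos (hk₁ : Differentiable ℝ k) {η : ℝ} (hη : η ≠ 0) : 0 < η * deriv k η := by
  obtain ⟨u, rfl⟩ := exists_neg_two_mul_L_eq η
  have hu : u ≠ 0 := by rintro rfl; simp [L] at hη
  rw [deriv_k_neg_two_mul_L hk hk₁,
    show -(2 * L u) * (-u / (2 * (1 + u ^ 2))) = L u * u / (1 + u ^ 2) by field_simp]
  exact div_pos (L_mul_self_pos hu) (by positivity)

lemma sInf_abs_fk_pos (hk₁ : ContDiff ℝ 1 k) {ε M : ℝ} (hε : 0 < ε) (hεM : ε ≤ M) :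
    0 < sInf ((fun η => |fk k η|) '' Icc ε M) :=
  sInf_image_Icc_pos hεM (continuous_fk hk₁ (k_pos hk)).abs.continuousOn fun _ hη =>
    abs_pos.2 (right_ne_zero_of_mul (mul_fk_pos (k_pos hk)
      (fun _ => mul_deriv_k_pos hk (hk₁.differentiable one_ne_zero)) (hε.trans_le hη.1).ne').ne')

lemma sInf_abs_fk_le (hk₁ : ContDiff ℝ 1 k) {ε M η : ℝ} (hη : |η| ∈ Icc ε M) :
    sInf ((fun η => |fk k η|) '' Icc ε M) ≤ |fk k η| :=
  abs_fk_abs (k_neg hk) η ▸ csInf_le (isCompact_Icc.image_of_continuousOn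
    (continuous_fk hk₁ (k_pos hk)).abs.continuousOn).bddBelow ⟨|η|, hη, rfl⟩

end Speed

/-- A `C¹` solution of the diagonal system on the closed strip `[0, τ] × ℝ`, with its forward
(`x₁`) and backward (`x₂`) characteristic families. -/
structure IsCharacteristicSolution (k r₀ : ℝ → ℝ) (τ : ℝ) (r l x₁ x₂ : ℝ → ℝ → ℝ) : Prop where
  contDiffOn_r : ContDiffOn ℝ 1 (uncurry r) (Icc 0 τ ×ˢ univ)
  contDiffOn_l : ContDiffOn ℝ 1 (uncurry l) (Icc 0 τ ×ˢ univ)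
  contDiffOn_x₁ : ContDiffOn ℝ 1 (uncurry x₁) (Icc 0 τ ×ˢ univ)
  pde_r : ∀ t ∈ Ioo 0 τ, ∀ x, deriv (fun s => r s x) t + k (r t x - l t x) * deriv (r t) x = 0
  pde_l : ∀ t ∈ Ioo 0 τ, ∀ x, deriv (fun s => l s x) t - k (r t x - l t x) * deriv (l t) x = 0
  r_zero : ∀ x, r 0 x = r₀ x
  l_zero : ∀ x, l 0 x = -r₀ x
  hasDerivAt_x₁ : ∀ a, ∀ t ∈ Icc 0 τ,
    HasDerivAt (fun s => x₁ s a) (k (r t (x₁ t a) - l t (x₁ t a))) t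
  x₁_zero : ∀ a, x₁ 0 a = a
  hasDerivAt_x₂ : ∀ b, ∀ t ∈ Icc 0 τ,
    HasDerivAt (fun s => x₂ s b) (-k (r t (x₂ t b) - l t (x₂ t b))) t
  x₂_zero : ∀ b, x₂ 0 b = b

namespace IsCharacteristicSolution

variable {k r₀ : ℝ → ℝ} {τ : ℝ} {r l x₁ x₂ : ℝ → ℝ → ℝ}
  (hs : IsCharacteristicSolution k r₀ τ r l x₁ x₂)
include hs

lemma continuousOn_x₁ (a : ℝ) : ContinuousOn (fun s => x₁ s a) (Icc 0 τ) :=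
  HasDerivAt.continuousOn (hs.hasDerivAt_x₁ a)

lemma r_x₁ (a : ℝ) {t : ℝ} (ht : t ∈ Icc 0 τ) : r t (x₁ t a) = r₀ a := by
  rw [eq_apply_zero_of_transport hs.contDiffOn_r hs.pde_r (hs.hasDerivAt_x₁ a) ht, hs.x₁_zero,
    hs.r_zero]

lemma l_x₂ (b : ℝ) {t : ℝ} (ht : t ∈ Icc 0 τ) : l t (x₂ t b) = -r₀ b := by
  rw [eq_apply_zero_of_transport (c := fun t x => -k (r t x - l t x)) hs.contDiffOn_l
    (fun t ht x => by rw [neg_mul, ← sub_eq_add_neg]; exact hs.pde_l t ht x)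
    (hs.hasDerivAt_x₂ b) ht, hs.x₂_zero, hs.l_zero]

lemma le_x₁ (hkpos : ∀ η, 0 < k η) (a : ℝ) {t : ℝ} (ht : t ∈ Icc 0 τ) : a ≤ x₁ t a := by
  have hsub : Icc 0 t ⊆ Icc 0 τ := Icc_subset_Icc_right ht.2
  have h := sub_le_mul_sub_of_hasDerivAt_le (C := 0) ht.1 ((hs.continuousOn_x₁ a).mono hsub).neg
    (fun s hs' => (hs.hasDerivAt_x₁ a s (hsub (Ioo_subset_Icc_self hs'))).neg)
    fun _ _ => neg_nonpos.2 (hkpos _).le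
  simp only [Pi.neg_apply, hs.x₁_zero, zero_mul] at h
  linarith

lemma x₂_le (hkpos : ∀ η, 0 < k η) (b : ℝ) {t : ℝ} (ht : t ∈ Icc 0 τ) : x₂ t b ≤ b := by
  have hsub : Icc 0 t ⊆ Icc 0 τ := Icc_subset_Icc_right ht.2
  have h := sub_le_mul_sub_of_hasDerivAt_le (C := 0) ht.1
    (HasDerivAt.continuousOn fun s hs' => hs.hasDerivAt_x₂ b s (hsub hs'))
    (fun s hs' => hs.hasDerivAt_x₂ b s (hsub (Ioo_subset_Icc_self hs')))
    fun _ _ => neg_nonpos.2 (hkpos _).le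
  simp only [hs.x₂_zero, zero_mul] at h
  linarith

lemma continuousOn_l_x₁ (a : ℝ) : ContinuousOn (fun t => l t (x₁ t a)) (Icc 0 τ) :=
  hs.contDiffOn_l.continuousOn.comp (continuousOn_id.prodMk (hs.continuousOn_x₁ a))
    fun _ ht => ⟨ht, trivial⟩

lemma exists_sub_l_x₁_eq (hkpos : ∀ η, 0 < k η) {a t : ℝ} (ht : t ∈ Icc 0 τ)
    (hcross : ∃ b, x₁ t a = x₂ t b) : ∃ b, a ≤ b ∧ r₀ a - l t (x₁ t a) = r₀ a + r₀ b := by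
  obtain ⟨b, hb⟩ := hcross
  refine ⟨b, (hs.le_x₁ hkpos a ht).trans (hb ▸ hs.x₂_le hkpos b ht), ?_⟩
  rw [hb, hs.l_x₂ b ht, sub_neg_eq_add]

lemma mul_sub_l_x₁_pos (hkpos : ∀ η, 0 < k η) {α : ℝ} (hsep : ∀ x, α ≤ x → r₀ α + r₀ x ≠ 0)
    (hcross : ∀ t ∈ Icc 0 τ, ∃ b, x₁ t α = x₂ t b) {t : ℝ} (ht : t ∈ Icc 0 τ) :
    0 < r₀ α * (r₀ α - l t (x₁ t α)) := by
  have h := mul_pos_of_continuousOn_of_ne_zero (f := fun t => r₀ α - l t (x₁ t α))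
    (continuousOn_const.sub (hs.continuousOn_l_x₁ α)) (fun t ht => by
      obtain ⟨b, hb, he⟩ := hs.exists_sub_l_x₁_eq hkpos ht (hcross t ht)
      exact he ▸ hsep b hb) t ht
  simp only [hs.x₁_zero, hs.l_zero, sub_neg_eq_add] at h
  linarith

lemma deriv_x₁_zero (a : ℝ) : deriv (x₁ 0) a = 1 := by
  simp [show x₁ 0 = id from funext hs.x₁_zero]

lemma continuousOn_deriv_x₁ (hτ : 0 < τ) (a : ℝ) :
    ContinuousOn (fun t => deriv (x₁ t) a) (Icc 0 τ) :=
  (continuousOn_deriv_snd hs.contDiffOn_x₁ (uniqueDiffOn_Icc hτ)).comp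
    (continuousOn_id.prodMk continuousOn_const) fun _ ht => ⟨ht, trivial⟩

lemma deriv_r_mul_deriv_x₁ (hr₀ : Differentiable ℝ r₀) (a : ℝ) {t : ℝ} (ht : t ∈ Icc 0 τ) :
    deriv (r t) (x₁ t a) * deriv (x₁ t) a = deriv r₀ a := by
  have hr := (hasDerivAt_fderivWithin_snd (hs.contDiffOn_r.differentiableOn one_ne_zero) ht
    (x₁ t a)).differentiableAt.hasDerivAt
  have hx := (hasDerivAt_fderivWithin_snd (hs.contDiffOn_x₁.differentiableOn one_ne_zero) ht
    a).differentiableAt.hasDerivAt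
  have h := hr.comp a hx
  rw [show r t ∘ x₁ t = r₀ from funext fun a => hs.r_x₁ a ht] at h
  exact h.unique (hr₀ a).hasDerivAt

lemma deriv_x₁_pos (hr₀ : Differentiable ℝ r₀) (hτ : 0 < τ) {a : ℝ} (ha : deriv r₀ a ≠ 0) {t : ℝ}
    (ht : t ∈ Icc 0 τ) : 0 < deriv (x₁ t) a := by
  have h := mul_pos_of_continuousOn_of_ne_zero (hs.continuousOn_deriv_x₁ hτ a)
    (fun t ht hJ => ha (by rw [← hs.deriv_r_mul_deriv_x₁ hr₀ a ht, hJ, mul_zero])) t ht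
  rwa [hs.deriv_x₁_zero, one_mul] at h

lemma hasDerivAt_l_x₁ (a : ℝ) {t : ℝ} (ht : t ∈ Ioo 0 τ) :
    HasDerivAt (fun s => l s (x₁ s a)) (2 * k (r₀ a - l t (x₁ t a)) * deriv (l t) (x₁ t a)) t := by
  have hdiff : DifferentiableAt ℝ (uncurry l) (t, x₁ t a) :=
    (hs.contDiffOn_l.contDiffAt (prod_mem_nhds (Icc_mem_nhds ht.1 ht.2) univ_mem)).differentiableAt
      one_ne_zero
  have h := hasDerivAt_comp_curve hdiff (hs.hasDerivAt_x₁ a t (Ioo_subset_Icc_self ht))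
  have hpde := hs.pde_l t ht (x₁ t a)
  rw [hs.r_x₁ a (Ioo_subset_Icc_self ht)] at h hpde
  convert h using 1
  linarith

lemma hasDerivAt_deriv_x₁ (hk₁ : ContDiff ℝ 1 k) (hr₀ : ContDiff ℝ 1 r₀) (hτ : 0 < τ) (a : ℝ)
    {t : ℝ} (ht : t ∈ Ioo 0 τ) :
    HasDerivAt (fun s => deriv (x₁ s) a)
      (deriv k (r₀ a - l t (x₁ t a)) * (deriv r₀ a - deriv (l t) (x₁ t a) * deriv (x₁ t) a)) t := by
  have hψ : ContinuousOn (fun p : ℝ × ℝ => (p.1, x₁ p.1 p.2)) (Icc 0 τ ×ˢ univ) :=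
    continuous_fst.continuousOn.prodMk hs.contDiffOn_x₁.continuousOn
  have hψD : MapsTo (fun p : ℝ × ℝ => (p.1, x₁ p.1 p.2)) (Icc 0 τ ×ˢ univ) (Icc 0 τ ×ˢ univ) :=
    fun p hp => ⟨hp.1, trivial⟩
  have hη : ContinuousOn (fun p : ℝ × ℝ => r₀ p.2 - l p.1 (x₁ p.1 p.2)) (Icc 0 τ ×ˢ univ) :=
    (hr₀.continuous.comp continuous_snd).continuousOn.sub
      (hs.contDiffOn_l.continuousOn.comp hψ hψD)
  refine hasDerivAt_deriv_param (G := fun t a => k (r₀ a - l t (x₁ t a)))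
    (q := fun t a => deriv k (r₀ a - l t (x₁ t a)) *
      (deriv r₀ a - deriv (l t) (x₁ t a) * deriv (x₁ t) a))
    (fun a t ht => ?_) hs.x₁_zero (hk₁.continuous.comp_continuousOn hη) (fun t ht a => ?_) ?_ ht a
  · rw [← hs.r_x₁ a ht]
    exact hs.hasDerivAt_x₁ a t ht
  · have hl := (hasDerivAt_fderivWithin_snd (hs.contDiffOn_l.differentiableOn one_ne_zero) ht
      (x₁ t a)).differentiableAt.hasDerivAt
    have hx := (hasDerivAt_fderivWithin_snd (hs.contDiffOn_x₁.differentiableOn one_ne_zero) ht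
      a).differentiableAt.hasDerivAt
    exact (hk₁.differentiable one_ne_zero _).hasDerivAt.comp a
      ((hr₀.differentiable one_ne_zero a).hasDerivAt.sub (hl.comp a hx))
  · have hUD := uniqueDiffOn_Icc hτ
    exact ((hk₁.continuous_deriv le_rfl).comp_continuousOn hη).mul
      (((hr₀.continuous_deriv le_rfl).comp continuous_snd).continuousOn.sub
        (((continuousOn_deriv_snd hs.contDiffOn_l hUD).comp hψ hψD).mul
          (continuousOn_deriv_snd hs.contDiffOn_x₁ hUD)))

theorem horizon_mul_lt_one (hk₁ : ContDiff ℝ 1 k) (hkpos : ∀ η, 0 < k η)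
    (hksign : ∀ η, η ≠ 0 → 0 < η * deriv k η) (hr₀ : ContDiff ℝ 1 r₀) {α γ : ℝ}
    (hαsign : deriv r₀ α * r₀ α < 0) (hsep : ∀ x, α ≤ x → r₀ α + r₀ x ≠ 0)
    (hγ : ∀ x, α ≤ x → γ ≤ |fk k (r₀ α + r₀ x)|) (hτ : 0 < τ)
    (hcross : ∀ t ∈ Icc 0 τ, ∃ b, x₁ t α = x₂ t b) :
    τ * (√(k (2 * r₀ α)) * |deriv r₀ α| * γ) < 1 := by
  set η : ℝ → ℝ := fun t => r₀ α - l t (x₁ t α) with hη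
  set v : ℝ → ℝ := fun t => deriv (x₁ t) α / √(k (η t)) with hv
  have hv' (t : ℝ) (ht : t ∈ Ioo 0 τ) : HasDerivAt v (deriv r₀ α * fk k (η t)) t :=
    hasDerivAt_div_sqrt_comp (hk₁.differentiable one_ne_zero _) (hkpos _)
      (hs.hasDerivAt_deriv_x₁ hk₁ hr₀ hτ α ht) ((hs.hasDerivAt_l_x₁ α ht).const_sub (r₀ α))
  have hbound (t : ℝ) (ht : t ∈ Ioo 0 τ) : deriv r₀ α * fk k (η t) ≤ -(|deriv r₀ α| * γ) := by
    obtain ⟨b, hb, he⟩ : ∃ b, α ≤ b ∧ η t = r₀ α + r₀ b :=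
      hs.exists_sub_l_x₁_eq hkpos (Ioo_subset_Icc_self ht) (hcross t (Ioo_subset_Icc_self ht))
    have hηt : 0 < r₀ α * η t := hs.mul_sub_l_x₁_pos hkpos hsep hcross (Ioo_subset_Icc_self ht)
    exact mul_le_neg_abs_mul hαsign hηt (mul_fk_pos hkpos hksign (right_ne_zero_of_mul hηt.ne'))
      (he ▸ hγ b hb)
  have hvcont : ContinuousOn v (Icc 0 τ) :=
    (hs.continuousOn_deriv_x₁ hτ α).div (hk₁.continuous.comp_continuousOn
      (continuousOn_const.sub (hs.continuousOn_l_x₁ α))).sqrt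
      fun _ _ => (Real.sqrt_pos.2 (hkpos _)).ne'
  have hlin := sub_le_mul_sub_of_hasDerivAt_le hτ.le hvcont hv' hbound
  have hvτ : 0 < v τ := div_pos (hs.deriv_x₁_pos (hr₀.differentiable one_ne_zero) hτ
    (left_ne_zero_of_mul hαsign.ne) (right_mem_Icc.2 hτ.le)) (Real.sqrt_pos.2 (hkpos _))
  have hv₀ : v 0 = 1 / √(k (2 * r₀ α)) := by
    simp only [hv, hη, hs.deriv_x₁_zero, hs.x₁_zero, hs.l_zero, sub_neg_eq_add, two_mul]
  have h : |deriv r₀ α| * γ * τ < 1 / √(k (2 * r₀ α)) := by linarith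
  rw [lt_div_iff₀ (Real.sqrt_pos.2 (hkpos _))] at h
  linarith

end IsCharacteristicSolution

theorem critical_time_estimate_second_general
    (k : ℝ → ℝ) (hk : ∀ u : ℝ, k (-(2 * L u)) = Real.sqrt (1 + u ^ 2))
    (hk1 : ContDiff ℝ 1 k)
    (r₀ : ℝ → ℝ) (hr₀ : ContDiff ℝ 1 r₀)
    (hr₀b : ∃ C : ℝ, ∀ x, |r₀ x| ≤ C)
    (α : ℝ) (ε : ℝ) (hε : 0 < ε)
    (hαsign : deriv r₀ α * r₀ α < 0)
    (hsep : ∀ x : ℝ, α ≤ x → ε < |r₀ α + r₀ x|)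
    (T : EReal)
    (r l x₁ x₂ B : ℝ → ℝ → ℝ)
    (hrl : ContDiffOn ℝ 1 (fun p : ℝ × ℝ => (r p.1 p.2, l p.1 p.2))
      {p : ℝ × ℝ | 0 ≤ p.1 ∧ (p.1 : EReal) < T})
    (hsys : ∀ t x : ℝ, 0 ≤ t → (t : EReal) < T →
      deriv (fun s => r s x) t + k (r t x - l t x) * deriv (fun y => r t y) x = 0 ∧
      deriv (fun s => l s x) t - k (r t x - l t x) * deriv (fun y => l t y) x = 0)
    (hir : ∀ x, r 0 x = r₀ x) (hil : ∀ x, l 0 x = -(r₀ x))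
    (hx₁ode : ∀ (a t : ℝ), 0 ≤ t → (t : EReal) < T →
      HasDerivAt (fun s => x₁ s a) (k (r t (x₁ t a) - l t (x₁ t a))) t)
    (hx₁0 : ∀ a, x₁ 0 a = a)
    (hx₂ode : ∀ (b t : ℝ), 0 ≤ t → (t : EReal) < T →
      HasDerivAt (fun s => x₂ s b) (-(k (r t (x₂ t b) - l t (x₂ t b)))) t)
    (hx₂0 : ∀ b, x₂ 0 b = b)
    (hx₁C : ContDiffOn ℝ 1 (fun p : ℝ × ℝ => x₁ p.1 p.2)
      {p : ℝ × ℝ | 0 ≤ p.1 ∧ (p.1 : EReal) < T})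
    (hBint : ∀ (t a : ℝ), 0 ≤ t → (t : EReal) < T → x₁ t a = x₂ t (B t a)) :
    T ≤ ((1 / (Real.sqrt (k (2 * r₀ α)) * |deriv r₀ α| *
      sInf ((fun η => |fk k η|) ''
        Set.Icc ε (⨆ x ∈ Set.Ici α, |r₀ α + r₀ x|))) : ℝ) : EReal) := by
  obtain ⟨C, hC⟩ := hr₀b
  have hM (x : ℝ) (hx : α ≤ x) := abs_add_le_biSup hC hx
  have hγ := sInf_abs_fk_pos hk hk1 hε ((hsep α le_rfl).le.trans (hM α le_rfl))
  have hpos : 0 < √(k (2 * r₀ α)) * |deriv r₀ α| *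
      sInf ((fun η => |fk k η|) '' Icc ε (⨆ x ∈ Ici α, |r₀ α + r₀ x|)) :=
    mul_pos (mul_pos (Real.sqrt_pos.2 (k_pos hk _)) (abs_pos.2 (left_ne_zero_of_mul hαsign.ne))) hγ
  by_contra! hT
  obtain ⟨τ, hτc, hτT⟩ := EReal.lt_iff_exists_real_btwn.1 hT
  have hτc' : 1 / _ < τ := EReal.coe_lt_coe_iff.1 hτc
  have hlt (t : ℝ) (ht : t ∈ Icc 0 τ) : (t : EReal) < T :=
    (EReal.coe_le_coe_iff.2 ht.2).trans_lt hτT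
  have hsub : Icc 0 τ ×ˢ univ ⊆ {p : ℝ × ℝ | 0 ≤ p.1 ∧ (p.1 : EReal) < T} :=
    fun p hp => ⟨hp.1.1, hlt _ hp.1⟩
  have hsol : IsCharacteristicSolution k r₀ τ r l x₁ x₂ :=
    { contDiffOn_r := (hrl.mono hsub).fst
      contDiffOn_l := (hrl.mono hsub).snd
      contDiffOn_x₁ := hx₁C.mono hsub
      pde_r := fun t ht x => (hsys t x ht.1.le (hlt t (Ioo_subset_Icc_self ht))).1
      pde_l := fun t ht x => (hsys t x ht.1.le (hlt t (Ioo_subset_Icc_self ht))).2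
      r_zero := hir
      l_zero := hil
      hasDerivAt_x₁ := fun a t ht => hx₁ode a t ht.1 (hlt t ht)
      x₁_zero := hx₁0
      hasDerivAt_x₂ := fun b t ht => hx₂ode b t ht.1 (hlt t ht)
      x₂_zero := hx₂0 }
  refine ((div_lt_iff₀ hpos).1 hτc').not_gt (hsol.horizon_mul_lt_one hk1 (k_pos hk)
    (fun _ => mul_deriv_k_pos hk (hk1.differentiable one_ne_zero)) hr₀ hαsign
    (fun x hx => abs_pos.1 (hε.trans (hsep x hx)))
    (fun x hx => sInf_abs_fk_le hk hk1 ⟨(hsep x hx).le, hM x hx⟩)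
    ((one_div_pos.2 hpos).trans hτc') fun t ht => ⟨B t α, hBint t α ht.1 (hlt t ht)⟩)

/-- second critical-time estimate: if `r₀'(α)(r₀(α)+r₀(+∞)) < 0`,
`r₀'(α)·r₀(α) < 0`, and `|r₀(α)+r₀(x)| > ε` for all `x ≥ α`, then any C¹ solution of the
diagonal system on `[0,T)×ℝ` (with C¹ characteristic families and intersection function)
has `T ≤ 1/(√(k(2r₀(α)))·|r₀'(α)|·γ₂⁺(α))` with
`γ₂⁺(α) = min {|f(η)| : η ∈ [ε, sup_{x ≥ α} |r₀(α)+r₀(x)|]}`. -/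
theorem critical_time_estimate_second
    (k : ℝ → ℝ) (hk : ∀ u : ℝ, k (-(2 * L u)) = Real.sqrt (1 + u ^ 2))
    (hk1 : ContDiff ℝ 1 k)
    (r₀ : ℝ → ℝ) (hr₀ : ContDiff ℝ 1 r₀)
    (hr₀b : ∃ C : ℝ, ∀ x, |r₀ x| ≤ C) (hr₀'b : ∃ C : ℝ, ∀ x, |deriv r₀ x| ≤ C)
    (rp : ℝ) (hrp : Tendsto r₀ atTop (nhds rp))
    (α : ℝ) (ε : ℝ) (hε : 0 < ε) (hα : deriv r₀ α * (r₀ α + rp) < 0)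
    (hαsign : deriv r₀ α * r₀ α < 0)
    (hsep : ∀ x : ℝ, α ≤ x → ε < |r₀ α + r₀ x|)
    (T : EReal) (hT : 0 < T)
    (r l x₁ x₂ B : ℝ → ℝ → ℝ)
    (hrl : ContDiffOn ℝ 1 (fun p : ℝ × ℝ => (r p.1 p.2, l p.1 p.2))
      {p : ℝ × ℝ | 0 ≤ p.1 ∧ (p.1 : EReal) < T})
    (hsys : ∀ t x : ℝ, 0 ≤ t → (t : EReal) < T →
      deriv (fun s => r s x) t + k (r t x - l t x) * deriv (fun y => r t y) x = 0 ∧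
      deriv (fun s => l s x) t - k (r t x - l t x) * deriv (fun y => l t y) x = 0)
    (hir : ∀ x, r 0 x = r₀ x) (hil : ∀ x, l 0 x = -(r₀ x))
    (hx₁ode : ∀ (a t : ℝ), 0 ≤ t → (t : EReal) < T →
      HasDerivAt (fun s => x₁ s a) (k (r t (x₁ t a) - l t (x₁ t a))) t)
    (hx₁0 : ∀ a, x₁ 0 a = a)
    (hx₂ode : ∀ (b t : ℝ), 0 ≤ t → (t : EReal) < T →
      HasDerivAt (fun s => x₂ s b) (-(k (r t (x₂ t b) - l t (x₂ t b)))) t)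
    (hx₂0 : ∀ b, x₂ 0 b = b)
    (hx₁C : ContDiffOn ℝ 1 (fun p : ℝ × ℝ => x₁ p.1 p.2)
      {p : ℝ × ℝ | 0 ≤ p.1 ∧ (p.1 : EReal) < T})
    (hx₂C : ContDiffOn ℝ 1 (fun p : ℝ × ℝ => x₂ p.1 p.2)
      {p : ℝ × ℝ | 0 ≤ p.1 ∧ (p.1 : EReal) < T})
    (hx₁mix : ContinuousOn
      (fun p : ℝ × ℝ => deriv (fun s => deriv (fun a => x₁ s a) p.2) p.1)
      {p : ℝ × ℝ | 0 ≤ p.1 ∧ (p.1 : EReal) < T})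
    (hx₂mix : ContinuousOn
      (fun p : ℝ × ℝ => deriv (fun s => deriv (fun b => x₂ s b) p.2) p.1)
      {p : ℝ × ℝ | 0 ≤ p.1 ∧ (p.1 : EReal) < T})
    (hB : ContDiffOn ℝ 1 (fun p : ℝ × ℝ => B p.1 p.2)
      {p : ℝ × ℝ | 0 ≤ p.1 ∧ (p.1 : EReal) < T})
    (hBint : ∀ (t a : ℝ), 0 ≤ t → (t : EReal) < T → x₁ t a = x₂ t (B t a)) :
    T ≤ ((1 / (Real.sqrt (k (2 * r₀ α)) * |deriv r₀ α| *
      sInf ((fun η => |fk k η|) ''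
        Set.Icc ε (⨆ x ∈ Set.Ici α, |r₀ α + r₀ x|))) : ℝ) : EReal) :=
  critical_time_estimate_second_general k hk hk1 r₀ hr₀ hr₀b α ε hε hαsign hsep T r l x₁ x₂ B hrl
    hsys hir hil hx₁ode hx₁0 hx₂ode hx₂0 hx₁C hBint
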